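/- arXiv:math/0303090 — 2 statements merged into one kernel-verified Lean document; each statement's English description precedes it below -/
import Mathlib

section
/- Let A and B be unital C*-algebras and φ : A → B a unital completely positive map. Then for all x, y ∈ A, ‖φ(x*y) − φ(x)*φ(y)‖ ≤ ‖φ(x*x) − φ(x)*φ(x)‖^{1/2} · ‖φ(y*y) − φ(y)*φ(y)‖^{1/2}. -/
/-- A square matrix over a C*-algebra is positive if it has the form `xᴴ * x`. -/
def MatIsPos {n : ℕ} {A : Type*} [NonUnitalNonAssocSemiring A] [Star A]
    (M : Matrix (Fin n) (Fin n) A) : Prop :=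
  ∃ x : Matrix (Fin n) (Fin n) A, M = x.conjTranspose * x

/-- `φ` is completely positive: every matrix amplification preserves positivity. -/
def IsCompletelyPositive {A B : Type*} [NonUnitalNonAssocSemiring A] [Star A]
    [NonUnitalNonAssocSemiring B] [Star B] [Module ℂ A] [Module ℂ B] (φ : A →ₗ[ℂ] B) : Prop :=
  ∀ (n : ℕ) (M : Matrix (Fin n) (Fin n) A), MatIsPos M → MatIsPos (M.map φ)

private lemma sum_conj {n : ℕ} {R : Type*} [Ring R] [StarRing R]
    (N : Matrix (Fin n) (Fin n) R) (b : Fin n → R) :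
    ∑ i, ∑ j, star (b i) * ((N.conjTranspose * N) i j) * (b j)
      = ∑ k, star (N.mulVec b k) * (N.mulVec b k) := by
  have h1 : ∑ i, ∑ j, star (b i) * ((N.conjTranspose * N) i j) * (b j)
      = dotProduct (star b) ((N.conjTranspose * N).mulVec b) := by
    simp [dotProduct, Matrix.mulVec, Finset.mul_sum, mul_assoc]
  have h2 : ∑ k, star (N.mulVec b k) * N.mulVec b k
      = dotProduct (star (N.mulVec b)) (N.mulVec b) := rfl
  rw [h1, h2, Matrix.star_mulVec, ← Matrix.mulVec_mulVec, Matrix.dotProduct_mulVec]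

private lemma phi_star {A B : Type*} [CStarAlgebra A] [CStarAlgebra B]
    (φ : A →ₗ[ℂ] B) (hcp : IsCompletelyPositive φ) (a : A) :
    φ (star a) = star (φ a) := by
  set w : Matrix (Fin 2) (Fin 2) A := Matrix.of fun i j => if i = 0 then (![1, a] j) else 0 with hw
  obtain ⟨N, hN⟩ := hcp 2 (w.conjTranspose * w) ⟨w, rfl⟩
  have h10 : (w.conjTranspose * w) 1 0 = star a := by
    simp [hw, Matrix.mul_apply, Matrix.conjTranspose_apply, Fin.sum_univ_two]
  have h01 : (w.conjTranspose * w) 0 1 = a := by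
    simp [hw, Matrix.mul_apply, Matrix.conjTranspose_apply, Fin.sum_univ_two]
  have key : (N.conjTranspose * N) 1 0 = star ((N.conjTranspose * N) 0 1) := by
    simp [Matrix.mul_apply, Matrix.conjTranspose_apply, star_sum]
  have e1 : φ (star a) = (N.conjTranspose * N) 1 0 := by
    rw [← hN]; simp [Matrix.map_apply, h10]
  have e2 : φ a = (N.conjTranspose * N) 0 1 := by
    rw [← hN]; simp [Matrix.map_apply, h01]
  rw [e1, e2, key]

private lemma key_pos {A B : Type*} [CStarAlgebra A] [CStarAlgebra B]
    (φ : A →ₗ[ℂ] B) (hunit : φ 1 = 1) (hcp : IsCompletelyPositive φ) (x y : A) (b₁ b₂ : B) :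
    ∃ c : Fin 3 → B,
      star b₁ * (φ (star x * x) - star (φ x) * φ x) * b₁
        + star b₁ * (φ (star x * y) - star (φ x) * φ y) * b₂
        + star b₂ * (φ (star y * x) - star (φ y) * φ x) * b₁
        + star b₂ * (φ (star y * y) - star (φ y) * φ y) * b₂
      = ∑ k, star (c k) * c k := by
  set v : Fin 3 → A := ![1, x, y] with hv
  set w : Matrix (Fin 3) (Fin 3) A := Matrix.of fun i j => if i = 0 then v j else 0 with hw
  obtain ⟨N, hN⟩ := hcp 3 (w.conjTranspose * w) ⟨w, rfl⟩
  set b : Fin 3 → B := ![-(φ x * b₁ + φ y * b₂), b₁, b₂] with hb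
  refine ⟨N.mulVec b, ?_⟩
  rw [← sum_conj N b, ← hN]
  have hM : ∀ i j, ((w.conjTranspose * w).map φ) i j = φ (star (v i) * v j) := by
    intro i j
    simp [hw, Matrix.map_apply, Matrix.mul_apply, Matrix.conjTranspose_apply, Fin.sum_univ_three]
  simp only [hM]
  rw [Fin.sum_univ_three]
  simp only [Fin.sum_univ_three, hb, hv]
  simp only [Matrix.cons_val_zero, Matrix.cons_val_one, Matrix.head_cons, Matrix.cons_val_two,
    Matrix.tail_cons, star_one, one_mul, mul_one, hunit, star_neg, star_add, star_mul,
    star_star, map_mul]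
  rw [phi_star φ hcp x, phi_star φ hcp y]
  noncomm_ring

/-- Cauchy–Schwarz-type inequality for the multiplicative defect of a unital completely
positive map: `‖φ(x*y) − φ(x)*φ(y)‖ ≤ ‖φ(x*x) − φ(x)*φ(x)‖^{1/2} ‖φ(y*y) − φ(y)*φ(y)‖^{1/2}`. -/
theorem stmt5 {A B : Type*} [CStarAlgebra A] [CStarAlgebra B]
    (φ : A →ₗ[ℂ] B) (hunit : φ 1 = 1) (hcp : IsCompletelyPositive φ) (x y : A) :
    ‖φ (star x * y) - star (φ x) * φ y‖ ≤
      Real.sqrt ‖φ (star x * x) - star (φ x) * φ x‖ *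
        Real.sqrt ‖φ (star y * y) - star (φ y) * φ y‖ := by
  letI : PartialOrder B := CStarAlgebra.spectralOrder B
  letI : StarOrderedRing B := CStarAlgebra.spectralOrderedRing B
  set Sx : B := φ (star x * x) - star (φ x) * φ x with hSxdef
  set Sy : B := φ (star y * y) - star (φ y) * φ y with hSydef
  set T : B := φ (star x * y) - star (φ x) * φ y with hTdef
  have hT' : φ (star y * x) - star (φ y) * φ x = star T := by
    rw [hTdef, star_sub, star_mul, star_star, show star y * x = star (star x * y) by
      rw [star_mul, star_star], phi_star φ hcp]
  have pos : ∀ b₁ b₂ : B, 0 ≤ star b₁ * Sx * b₁ + star b₁ * T * b₂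
      + star b₂ * star T * b₁ + star b₂ * Sy * b₂ := by
    intro b₁ b₂
    obtain ⟨c, hc⟩ := key_pos φ hunit hcp x y b₁ b₂
    rw [hT'] at hc
    rw [hSxdef, hSydef, hTdef, hc]
    exact Finset.sum_nonneg fun k _ => star_mul_self_nonneg _
  have hSx : (0 : B) ≤ Sx := by have := pos 1 0; simpa using this
  have hSy : (0 : B) ≤ Sy := by have := pos 0 1; simpa using this
  have hTT : (0 : B) ≤ star T * T := star_mul_self_nonneg T
  -- main bound
  have hbound : ∀ ε : ℝ, 0 < ε → ‖star T * T‖ ≤ (‖Sx‖ + ε) * ‖Sy‖ := by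
    intro ε hε
    set a : ℝ := ‖Sx‖ + ε with ha
    have ha0 : 0 < a := by positivity
    have h1 := pos ((-(a⁻¹)) • T) 1
    have e : star ((-(a⁻¹)) • T) * Sx * ((-(a⁻¹)) • T) + star ((-(a⁻¹)) • T) * T * 1
        + star (1:B) * star T * ((-(a⁻¹)) • T) + star (1:B) * Sy * 1
        = (a⁻¹ * a⁻¹) • (star T * Sx * T) - (2 * a⁻¹) • (star T * T) + Sy := by
      simp only [star_smul, star_trivial, star_one, smul_mul_assoc, mul_smul_comm,
        one_mul, mul_one, smul_smul]
      module
    rw [e] at h1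
    -- conjugation bound : star T * Sx * T ≤ a • (star T * T)
    have hSxsa : IsSelfAdjoint Sx := .of_nonneg hSx
    have h2 : star T * Sx * T ≤ a • (star T * T) := by
      have := star_left_conjugate_le_conjugate (IsSelfAdjoint.le_algebraMap_norm_self hSxsa) T
      calc star T * Sx * T ≤ star T * algebraMap ℝ B ‖Sx‖ * T := this
        _ = ‖Sx‖ • (star T * T) := by
            rw [Algebra.algebraMap_eq_smul_one]
            simp only [mul_smul_comm, smul_mul_assoc, mul_one]
        _ ≤ a • (star T * T) := by
            rw [← sub_nonneg, ← sub_smul]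
            have : a - ‖Sx‖ = ε := by rw [ha]; ring
            rw [this]
            have h6 : star (Real.sqrt ε • T) * (Real.sqrt ε • T) = ε • (star T * T) := by
              simp only [star_smul, star_trivial, smul_mul_smul_comm, Real.mul_self_sqrt hε.le]
            rw [← h6]
            exact star_mul_self_nonneg _
    have h3 : Sy ≤ algebraMap ℝ B ‖Sy‖ :=
      IsSelfAdjoint.le_algebraMap_norm_self (.of_nonneg hSy)
    -- combine
    have h4 : (a⁻¹) • (star T * T) ≤ algebraMap ℝ B ‖Sy‖ := by
      have hmono : (a⁻¹ * a⁻¹) • (star T * Sx * T) ≤ (a⁻¹ * a⁻¹) • (a • (star T * T)) := by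
        rw [← sub_nonneg, ← smul_sub]
        have hle := sub_nonneg.mpr h2
        have : (a⁻¹ * a⁻¹) • (a • (star T * T) - star T * Sx * T)
            = star (a⁻¹ • (1:B)) * (a • (star T * T) - star T * Sx * T) * (a⁻¹ • (1:B)) := by
          simp only [star_smul, star_trivial, star_one, smul_mul_assoc, mul_smul_comm,
            one_mul, mul_one, smul_smul]
        rw [this]
        calc (0:B) = star (a⁻¹ • (1:B)) * 0 * (a⁻¹ • (1:B)) := by simp
          _ ≤ _ := star_left_conjugate_le_conjugate hle _
      have step : (0:B) ≤ (a⁻¹ * a⁻¹) • (a • (star T * T)) - (2 * a⁻¹) • (star T * T) + Sy := by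
        calc (0:B) ≤ (a⁻¹ * a⁻¹) • (star T * Sx * T) - (2 * a⁻¹) • (star T * T) + Sy := h1
          _ ≤ _ := by
              rw [← sub_nonneg] at hmono ⊢
              convert hmono using 1
              abel
      have ecoef : (a⁻¹ * a⁻¹) • (a • (star T * T)) - (2 * a⁻¹) • (star T * T)
          = -((a⁻¹) • (star T * T)) := by
        rw [smul_smul, ← sub_smul, ← neg_smul]
        congr 1
        field_simp
        ring
      rw [ecoef] at step
      calc (a⁻¹) • (star T * T) ≤ Sy := by
            rw [← sub_nonneg]
            convert step using 1
            abel
        _ ≤ algebraMap ℝ B ‖Sy‖ := h3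
    -- scale back up by a
    have h5 : star T * T ≤ algebraMap ℝ B (a * ‖Sy‖) := by
      have := star_left_conjugate_le_conjugate h4 (Real.sqrt a • (1:B))
      have lhs_eq : star (Real.sqrt a • (1:B)) * ((a⁻¹) • (star T * T)) * (Real.sqrt a • (1:B))
          = star T * T := by
        simp only [star_smul, star_trivial, star_one, smul_mul_assoc, mul_smul_comm,
          one_mul, mul_one, smul_smul]
        rw [show Real.sqrt a * (a⁻¹ * Real.sqrt a) = 1 by
          rw [mul_comm a⁻¹, ← mul_assoc, Real.mul_self_sqrt ha0.le, mul_inv_cancel₀ ha0.ne'],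
          one_smul]
      have rhs_eq : star (Real.sqrt a • (1:B)) * algebraMap ℝ B ‖Sy‖ * (Real.sqrt a • (1:B))
          = algebraMap ℝ B (a * ‖Sy‖) := by
        rw [Algebra.algebraMap_eq_smul_one (R := ℝ) ‖Sy‖, Algebra.algebraMap_eq_smul_one (R := ℝ) (a * ‖Sy‖)]
        simp only [star_smul, star_trivial, star_one, smul_mul_assoc, mul_smul_comm,
          one_mul, mul_one, smul_smul]
        rw [show Real.sqrt a * (‖Sy‖ * Real.sqrt a) = a * ‖Sy‖ by
          rw [mul_comm ‖Sy‖, ← mul_assoc, Real.mul_self_sqrt ha0.le]]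
      rw [lhs_eq, rhs_eq] at this
      exact this
    have hr : 0 ≤ a * ‖Sy‖ := by positivity
    exact (CStarAlgebra.norm_le_iff_le_algebraMap (star T * T) hr hTT).mpr h5
  -- conclude
  have hsq : ‖T‖ ^ 2 ≤ ‖Sx‖ * ‖Sy‖ := by
    rw [sq, ← CStarRing.norm_star_mul_self]
    by_cases hy0 : ‖Sy‖ = 0
    · have := hbound 1 one_pos
      rw [hy0, mul_zero] at this ⊢
      exact this
    · have hy0' : 0 < ‖Sy‖ := lt_of_le_of_ne (norm_nonneg _) (Ne.symm hy0)
      refine le_of_forall_pos_le_add fun δ hδ => ?_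
      have := hbound (δ / ‖Sy‖) (by positivity)
      calc ‖star T * T‖ ≤ (‖Sx‖ + δ / ‖Sy‖) * ‖Sy‖ := this
        _ = ‖Sx‖ * ‖Sy‖ + δ := by field_simp
  calc ‖T‖ = Real.sqrt (‖T‖ ^ 2) := (Real.sqrt_sq (norm_nonneg _)).symm
    _ ≤ Real.sqrt (‖Sx‖ * ‖Sy‖) := Real.sqrt_le_sqrt hsq
    _ = Real.sqrt ‖Sx‖ * Real.sqrt ‖Sy‖ := Real.sqrt_mul (norm_nonneg _) _
end

section
/- Let A and B be unital C*-algebras and φ : A → B a unital completely positive map. Then for any unitaries u, v ∈ A, ‖φ(uv) − φ(u)φ(v)‖ ≤ 2‖φ(u) − u‖^{1/2}·‖φ(v) − v‖^{1/2} whenever B contains A as in the same algebra (i.e., A is a C*-subalgebra of B so that the differences φ(u) − u make sense). -/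
namespace Stmt6Aux

open Finset

lemma num_cs {p q r : ℝ} (hp : 0 ≤ p) (hq : 0 ≤ q) (hr : 0 ≤ r)
    (h : ∀ t : ℝ, 0 ≤ t → 2 * t * r ^ 2 ≤ t ^ 2 * p * r ^ 2 + q) :
    r ≤ Real.sqrt p * Real.sqrt q := by
  rcases eq_or_lt_of_le hr with h0 | h0
  · exact h0 ▸ mul_nonneg (Real.sqrt_nonneg _) (Real.sqrt_nonneg _)
  have hd : discrim (p * r ^ 2) (-(2 * r ^ 2)) q ≤ 0 := by
    apply discrim_le_zero
    intro t
    rcases le_or_gt 0 t with ht | ht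
    · have := h t ht; nlinarith
    · have h1 : 0 ≤ p * r ^ 2 * (t * t) :=
        mul_nonneg (mul_nonneg hp (sq_nonneg r)) (mul_self_nonneg t)
      nlinarith [mul_nonneg (sq_nonneg r) (neg_nonneg.mpr ht.le)]
  rw [discrim] at hd
  have hr2 : r ^ 2 ≤ p * q := by
    have h4 : r ^ 2 * r ^ 2 ≤ p * q * r ^ 2 := by nlinarith
    exact (mul_le_mul_iff_of_pos_right (by positivity : (0:ℝ) < r ^ 2)).mp h4
  have : r ≤ Real.sqrt (p * q) := by
    rw [show r = Real.sqrt (r ^ 2) by rw [Real.sqrt_sq hr]]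
    exact Real.sqrt_le_sqrt hr2
  rwa [Real.sqrt_mul hp] at this

variable {B : Type*} [CStarAlgebra B] [PartialOrder B] [StarOrderedRing B]

lemma inner_nonneg (w : Fin 3 → B) : (0 : B) ≤ ∑ i, star (w i) * w i :=
  Finset.sum_nonneg fun i _ => star_mul_self_nonneg _

lemma inner_conj (a b : Fin 3 → B) :
    ∑ i, star (b i) * a i = star (∑ i, star (a i) * b i) := by
  simp [star_sum, star_mul]

lemma inner_expand (g h a : Fin 3 → B) (m m' : B) :
    ∑ i, star (g i - a i * m) * (h i - a i * m')
      = (∑ i, star (g i) * h i) - (∑ i, star (g i) * a i) * m'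
        - star m * (∑ i, star (a i) * h i)
        + star m * (∑ i, star (a i) * a i) * m' := by
  simp only [Fin.sum_univ_three, star_sub, star_mul]
  noncomm_ring

lemma inner_cs (a b : Fin 3 → B) :
    ‖∑ i, star (a i) * b i‖ ≤
      Real.sqrt ‖∑ i, star (a i) * a i‖ * Real.sqrt ‖∑ i, star (b i) * b i‖ := by
  set P : B := ∑ i, star (a i) * a i with hP
  set Q : B := ∑ i, star (b i) * b i with hQ
  set R : B := ∑ i, star (a i) * b i with hR
  apply num_cs (norm_nonneg _) (norm_nonneg _) (norm_nonneg _)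
  intro t ht
  have expand : ∑ i, star (b i - a i * (t • R)) * (b i - a i * (t • R))
      = Q - (2 * t) • (star R * R) + (t ^ 2) • (star R * P * R) := by
    rw [inner_expand b b a (t • R) (t • R), inner_conj a b, ← hR, ← hP, ← hQ,
      star_smul, star_trivial t]
    simp only [mul_smul_comm, smul_mul_assoc, smul_smul]
    module
  have h0 : (0 : B) ≤ Q - (2 * t) • (star R * R) + (t ^ 2) • (star R * P * R) :=
    expand ▸ inner_nonneg _
  have hle : (2 * t) • (star R * R) ≤ Q + (t ^ 2) • (star R * P * R) := by
    rwa [sub_add_eq_add_sub, sub_nonneg] at h0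
  have hXnn : (0 : B) ≤ (2 * t) • (star R * R) := by
    have hrw : (2 * t) • (star R * R)
        = star (Real.sqrt (2 * t) • R) * (Real.sqrt (2 * t) • R) := by
      rw [star_smul, star_trivial (Real.sqrt (2 * t)), smul_mul_smul_comm,
        Real.mul_self_sqrt (by positivity)]
    rw [hrw]; exact star_mul_self_nonneg _
  have hnorm := CStarAlgebra.norm_le_norm_of_nonneg_of_le hXnn hle
  have h1 : ‖(2 * t) • (star R * R)‖ = 2 * t * ‖R‖ ^ 2 := by
    rw [norm_smul, CStarRing.norm_star_mul_self, Real.norm_eq_abs,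
      abs_of_nonneg (by positivity)]
    ring
  have h2 : ‖Q + (t ^ 2) • (star R * P * R)‖ ≤ ‖Q‖ + t ^ 2 * (‖R‖ * ‖P‖ * ‖R‖) := by
    refine (norm_add_le _ _).trans ?_
    have h3 : ‖(t ^ 2) • (star R * P * R)‖ ≤ t ^ 2 * (‖R‖ * ‖P‖ * ‖R‖) := by
      rw [norm_smul, Real.norm_eq_abs, abs_of_nonneg (sq_nonneg t)]
      have h4 : ‖star R * P * R‖ ≤ ‖R‖ * ‖P‖ * ‖R‖ := by
        calc ‖star R * P * R‖ ≤ ‖star R * P‖ * ‖R‖ := norm_mul_le _ _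
          _ ≤ ‖star R‖ * ‖P‖ * ‖R‖ := by
              gcongr; exact norm_mul_le _ _
          _ = ‖R‖ * ‖P‖ * ‖R‖ := by rw [norm_star]
      exact mul_le_mul_of_nonneg_left h4 (sq_nonneg t)
    linarith
  have := hnorm.trans h2
  rw [h1] at this
  nlinarith [sq_nonneg ‖R‖, norm_nonneg P]

end Stmt6Aux

set_option maxHeartbeats 2000000 in
open Stmt6Aux in
/-- If `A ⊆ B` are unital C*-algebras with common unit, `φ : A → B` is unital completely
positive, and `u, v ∈ A` are unitaries, then
`‖φ(uv) − φ(u)φ(v)‖ ≤ 2 ‖φ(u) − u‖^{1/2} ‖φ(v) − v‖^{1/2}`. -/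
theorem stmt6 {B : Type*} [CStarAlgebra B] (A : StarSubalgebra ℂ B)
    (φ : A →ₗ[ℂ] B) (hunit : φ 1 = 1) (hcp : IsCompletelyPositive φ)
    (u v : A) (hu : u ∈ unitary A) (hv : v ∈ unitary A) :
    ‖φ (u * v) - φ u * φ v‖ ≤
      2 * Real.sqrt ‖φ u - (u : B)‖ * Real.sqrt ‖φ v - (v : B)‖ := by
  rcases subsingleton_or_nontrivial B with hB | hB
  · have h0 : φ (u * v) - φ u * φ v = 0 := Subsingleton.elim _ _
    rw [h0, norm_zero]
    positivity
  letI : PartialOrder B := CStarAlgebra.spectralOrder B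
  letI : StarOrderedRing B := CStarAlgebra.spectralOrderedRing B
  obtain ⟨huu, huu'⟩ := Unitary.mem_iff.mp hu
  obtain ⟨hvv, hvv'⟩ := Unitary.mem_iff.mp hv
  set g : Fin 3 → A := ![1, star u, v] with hg
  set W : Matrix (Fin 3) (Fin 3) A := Matrix.of (fun i j => if i = 0 then g j else 0) with hW
  obtain ⟨z, hz⟩ := hcp 3 (W.conjTranspose * W) ⟨W, rfl⟩
  have key : ∀ j k : Fin 3, ∑ i, star (z i j) * z i k = φ (star (g j) * g k) := by
    intro j k
    have h1 : (W.conjTranspose * W).map φ j k = (z.conjTranspose * z) j k := by rw [hz]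
    have h2 : (z.conjTranspose * z) j k = ∑ i, star (z i j) * z i k := by
      simp [Matrix.mul_apply, Matrix.conjTranspose_apply]
    have h3 : (W.conjTranspose * W) j k = star (g j) * g k := by
      simp [Matrix.mul_apply, Matrix.conjTranspose_apply, hW, Fin.sum_univ_three]
    rw [← h2, ← h1, Matrix.map_apply, h3]
  set x : B := φ u with hx
  set y : B := φ v with hy
  have g0 : g 0 = 1 := rfl
  have g1 : g 1 = star u := rfl
  have g2 : g 2 = v := rfl
  have K00 : ∑ i, star (z i 0) * z i 0 = 1 := by
    rw [key 0 0, g0]; simpa using hunit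
  have K01 : ∑ i, star (z i 0) * z i 1 = φ (star u) := by
    rw [key 0 1, g0, g1]; simp
  have K10 : ∑ i, star (z i 1) * z i 0 = x := by
    rw [key 1 0, g1, g0]; simp [hx]
  have K02 : ∑ i, star (z i 0) * z i 2 = y := by
    rw [key 0 2, g0, g2]; simp [hy]
  have K20 : ∑ i, star (z i 2) * z i 0 = φ (star v) := by
    rw [key 2 0, g2, g0]; simp
  have K11 : ∑ i, star (z i 1) * z i 1 = 1 := by
    rw [key 1 1, g1, star_star, huu']; exact hunit
  have K22 : ∑ i, star (z i 2) * z i 2 = 1 := by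
    rw [key 2 2, g2, hvv]; exact hunit
  have K12 : ∑ i, star (z i 1) * z i 2 = φ (u * v) := by
    rw [key 1 2, g1, g2, star_star]
  -- star-preservation consequences
  have sφu : φ (star u) = star x := by
    rw [← K01, inner_conj (fun i => z i 1) (fun i => z i 0)]
    exact congrArg star K10
  have sφv : φ (star v) = star y := by
    rw [← K20, inner_conj (fun i => z i 0) (fun i => z i 2)]
    exact congrArg star K02
  -- the three key inner products
  have Ebb : ∑ i, star (z i 1 - z i 0 * star x) * (z i 1 - z i 0 * star x)
      = 1 - x * star x := by
    have e := inner_expand (B := B) (fun i => z i 1) (fun i => z i 1) (fun i => z i 0)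
      (star x) (star x)
    rw [e, K11, K10, K01, K00, sφu, star_star]
    noncomm_ring
  have Ecc : ∑ i, star (z i 2 - z i 0 * y) * (z i 2 - z i 0 * y)
      = 1 - star y * y := by
    have e := inner_expand (B := B) (fun i => z i 2) (fun i => z i 2) (fun i => z i 0)
      y y
    rw [e, K22, K20, K02, K00, sφv]
    noncomm_ring
  have Ebc : ∑ i, star (z i 1 - z i 0 * star x) * (z i 2 - z i 0 * y)
      = φ (u * v) - x * y := by
    have e := inner_expand (B := B) (fun i => z i 1) (fun i => z i 2) (fun i => z i 0)
      (star x) y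
    rw [e, K12, K10, K02, K00, star_star]
    noncomm_ring
  have Pbb : (0 : B) ≤ 1 - x * star x :=
    Ebb ▸ inner_nonneg (fun i => z i 1 - z i 0 * star x)
  have Pcc : (0 : B) ≤ 1 - star y * y :=
    Ecc ▸ inner_nonneg (fun i => z i 2 - z i 0 * y)
  -- norms of φ u and φ v are at most 1
  have hx1 : ‖x‖ ≤ 1 := by
    have h1 : x * star x ≤ 1 := by rwa [sub_nonneg] at Pbb
    have h2 : ‖x * star x‖ ≤ ‖(1 : B)‖ :=
      CStarAlgebra.norm_le_norm_of_nonneg_of_le (mul_star_self_nonneg x) h1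
    rw [CStarRing.norm_self_mul_star, norm_one] at h2
    nlinarith [norm_nonneg x]
  have hy1 : ‖y‖ ≤ 1 := by
    have h1 : star y * y ≤ 1 := by rwa [sub_nonneg] at Pcc
    have h2 : ‖star y * y‖ ≤ ‖(1 : B)‖ :=
      CStarAlgebra.norm_le_norm_of_nonneg_of_le (star_mul_self_nonneg y) h1
    rw [CStarRing.norm_star_mul_self, norm_one] at h2
    nlinarith [norm_nonneg y]
  -- unitaries in B
  have uuB : (u : B) * star (u : B) = 1 := by
    have := congrArg (Subtype.val) huu'
    simpa using this
  have uuB' : star (u : B) * (u : B) = 1 := by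
    have := congrArg (Subtype.val) huu
    simpa using this
  have vvB : star (v : B) * (v : B) = 1 := by
    have := congrArg (Subtype.val) hvv
    simpa using this
  have hnu : ‖(u : B)‖ ≤ 1 := by
    have : ‖star (u : B) * (u : B)‖ = ‖(u : B)‖ * ‖(u : B)‖ := CStarRing.norm_star_mul_self
    rw [uuB', norm_one] at this
    nlinarith [norm_nonneg (u : B), sq_nonneg (‖(u : B)‖ - 1)]
  have hnv : ‖(v : B)‖ ≤ 1 := by
    have : ‖star (v : B) * (v : B)‖ = ‖(v : B)‖ * ‖(v : B)‖ := CStarRing.norm_star_mul_self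
    rw [vvB, norm_one] at this
    nlinarith [norm_nonneg (v : B), sq_nonneg (‖(v : B)‖ - 1)]
  -- the two key norm bounds
  have HB : ‖(1 : B) - x * star x‖ ≤ 2 * ‖x - (u : B)‖ := by
    have idB : (1 : B) - x * star x
        = ((u : B) - x) * star x + (u : B) * star ((u : B) - x) := by
      rw [star_sub, ← uuB]; noncomm_ring
    rw [idB]
    calc ‖((u : B) - x) * star x + (u : B) * star ((u : B) - x)‖
        ≤ ‖((u : B) - x) * star x‖ + ‖(u : B) * star ((u : B) - x)‖ := norm_add_le _ _
      _ ≤ ‖(u : B) - x‖ * ‖star x‖ + ‖(u : B)‖ * ‖star ((u : B) - x)‖ := by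
          gcongr <;> exact norm_mul_le _ _
      _ ≤ ‖(u : B) - x‖ * 1 + 1 * ‖(u : B) - x‖ := by
          rw [norm_star, norm_star]
          have h5 : ‖(u : B) - x‖ * ‖x‖ ≤ ‖(u : B) - x‖ * 1 :=
            mul_le_mul_of_nonneg_left hx1 (norm_nonneg _)
          have h6 : ‖(u : B)‖ * ‖(u : B) - x‖ ≤ 1 * ‖(u : B) - x‖ :=
            mul_le_mul_of_nonneg_right hnu (norm_nonneg _)
          linarith
      _ = 2 * ‖x - (u : B)‖ := by rw [norm_sub_rev]; ring
  have HC : ‖(1 : B) - star y * y‖ ≤ 2 * ‖y - (v : B)‖ := by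
    have idB : (1 : B) - star y * y
        = star ((v : B) - y) * y + star (v : B) * ((v : B) - y) := by
      rw [star_sub, ← vvB]; noncomm_ring
    rw [idB]
    calc ‖star ((v : B) - y) * y + star (v : B) * ((v : B) - y)‖
        ≤ ‖star ((v : B) - y) * y‖ + ‖star (v : B) * ((v : B) - y)‖ := norm_add_le _ _
      _ ≤ ‖star ((v : B) - y)‖ * ‖y‖ + ‖star (v : B)‖ * ‖(v : B) - y‖ := by
          gcongr <;> exact norm_mul_le _ _
      _ ≤ ‖(v : B) - y‖ * 1 + 1 * ‖(v : B) - y‖ := by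
          rw [norm_star, norm_star]
          have h5 : ‖(v : B) - y‖ * ‖y‖ ≤ ‖(v : B) - y‖ * 1 :=
            mul_le_mul_of_nonneg_left hy1 (norm_nonneg _)
          have h6 : ‖(v : B)‖ * ‖(v : B) - y‖ ≤ 1 * ‖(v : B) - y‖ :=
            mul_le_mul_of_nonneg_right hnv (norm_nonneg _)
          linarith
      _ = 2 * ‖y - (v : B)‖ := by rw [norm_sub_rev]; ring
  -- put everything together
  have main : ‖φ (u * v) - x * y‖
      ≤ Real.sqrt ‖(1 : B) - x * star x‖ * Real.sqrt ‖(1 : B) - star y * y‖ := by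
    rw [← Ebb, ← Ecc, ← Ebc]
    exact inner_cs (fun i => z i 1 - z i 0 * star x) (fun i => z i 2 - z i 0 * y)
  calc ‖φ (u * v) - x * y‖
      ≤ Real.sqrt ‖(1 : B) - x * star x‖ * Real.sqrt ‖(1 : B) - star y * y‖ := main
    _ ≤ Real.sqrt (2 * ‖x - (u : B)‖) * Real.sqrt (2 * ‖y - (v : B)‖) := by
        exact mul_le_mul (Real.sqrt_le_sqrt HB) (Real.sqrt_le_sqrt HC)
          (Real.sqrt_nonneg _) (Real.sqrt_nonneg _)
    _ = 2 * Real.sqrt ‖x - (u : B)‖ * Real.sqrt ‖y - (v : B)‖ := by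
        rw [Real.sqrt_mul (by norm_num), Real.sqrt_mul (by norm_num : (0:ℝ) ≤ 2)]
        have h2 : Real.sqrt 2 * Real.sqrt 2 = 2 := Real.mul_self_sqrt (by norm_num)
        linear_combination Real.sqrt ‖x - (u : B)‖ * Real.sqrt ‖y - (v : B)‖ * h2
end
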